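/- arXiv:1612.08236 — 4 statements merged into one kernel-verified Lean document; each statement's English description precedes it below -/
import Mathlib

section
/- Let k be a field of prime characteristic p, and let W₁(k) be the Weyl algebra with generators x, y satisfying [x,y] = 1. Then for every integer i with 1 ≤ i ≤ p−1, one has W₁(k) = x^i·W₁(k) + y·W₁(k) (as additive groups, where the summands are right ideals generated by x^i and y). -/
/-- The relation defining the first Weyl algebra: `x * y = y * x + 1`,
where `x = ι 0`, `y = ι 1`. -/
inductive WeylRel (R : Type*) [CommRing R] :
    FreeAlgebra R (Fin 2) → FreeAlgebra R (Fin 2) → Prop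
  | weyl : WeylRel R (FreeAlgebra.ι R 0 * FreeAlgebra.ι R 1)
      (FreeAlgebra.ι R 1 * FreeAlgebra.ι R 0 + 1)

/-- The first Weyl algebra `W₁(R)` over a commutative ring `R`. -/
abbrev Weyl (R : Type*) [CommRing R] := RingQuot (WeylRel R)

noncomputable def Weyl.x (R : Type*) [CommRing R] : Weyl R :=
  RingQuot.mkAlgHom R (WeylRel R) (FreeAlgebra.ι R 0)

noncomputable def Weyl.y (R : Type*) [CommRing R] : Weyl R :=
  RingQuot.mkAlgHom R (WeylRel R) (FreeAlgebra.ι R 1)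


section Aux
variable (k : Type*) [Field k]

lemma weyl_comm : Weyl.x k * Weyl.y k = Weyl.y k * Weyl.x k + 1 := by
  have h := RingQuot.mkAlgHom_rel k (WeylRel.weyl (R := k))
  simpa [Weyl.x, Weyl.y, map_mul, map_add, map_one] using h

lemma x_mul_y_pow (m : ℕ) :
    Weyl.x k * (Weyl.y k) ^ (m + 1)
      = (Weyl.y k) ^ (m + 1) * Weyl.x k + (m + 1) • (Weyl.y k) ^ m := by
  induction m with
  | zero => simpa using weyl_comm k
  | succ n ih =>
    have h1 : Weyl.x k * Weyl.y k ^ (n + 2)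
        = (Weyl.x k * Weyl.y k ^ (n + 1)) * Weyl.y k := by
      rw [pow_succ, ← mul_assoc]
    rw [h1, ih, add_mul, mul_assoc, weyl_comm, smul_mul_assoc, ← pow_succ]
    rw [mul_add, ← mul_assoc, ← pow_succ, mul_one]
    rw [succ_nsmul (Weyl.y k ^ (n+1)) (n+1)]
    abel

lemma xj_y_pow (j : ℕ) : ∀ m, j < m →
    ∃ w, Weyl.x k ^ j * Weyl.y k ^ m = Weyl.y k * w := by
  induction j with
  | zero =>
    intro m hm
    obtain ⟨m', rfl⟩ : ∃ m', m = m' + 1 := ⟨m - 1, by omega⟩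
    exact ⟨Weyl.y k ^ m', by rw [pow_zero, one_mul, pow_succ']⟩
  | succ j ih =>
    intro m hm
    obtain ⟨m', rfl⟩ : ∃ m', m = m' + 1 := ⟨m - 1, by omega⟩
    obtain ⟨w1, hw1⟩ := ih (m' + 1) (by omega)
    obtain ⟨w2, hw2⟩ := ih m' (by omega)
    refine ⟨w1 * Weyl.x k + (m' + 1) • w2, ?_⟩
    have h1 : Weyl.x k ^ (j + 1) * Weyl.y k ^ (m' + 1)
        = Weyl.x k ^ j * (Weyl.x k * Weyl.y k ^ (m' + 1)) := by
      rw [pow_succ, mul_assoc]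
    rw [h1, x_mul_y_pow, mul_add, ← mul_assoc, hw1, mul_smul_comm, hw2,
      mul_add, mul_smul_comm, mul_assoc]

lemma x_pow_y_pow (i : ℕ) :
    ∃ v, Weyl.x k ^ i * Weyl.y k ^ i
      = (Nat.factorial i : k) • (1 : Weyl k) + Weyl.y k * v := by
  induction i with
  | zero => exact ⟨0, by simp [Nat.factorial]⟩
  | succ i ih =>
    obtain ⟨v, hv⟩ := ih
    obtain ⟨w, hw⟩ := xj_y_pow k i (i + 1) (by omega)
    refine ⟨w * Weyl.x k + ((i + 1 : ℕ) : k) • v, ?_⟩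
    have h1 : Weyl.x k ^ (i + 1) * Weyl.y k ^ (i + 1)
        = Weyl.x k ^ i * (Weyl.x k * Weyl.y k ^ (i + 1)) := by
      rw [pow_succ, mul_assoc]
    have hc : ((i + 1 : ℕ) : k) * (Nat.factorial i : k) = (Nat.factorial (i + 1) : k) := by
      rw [Nat.factorial_succ]; push_cast; ring
    rw [h1, x_mul_y_pow, mul_add, ← mul_assoc, hw, mul_smul_comm, hv,
      ← Nat.cast_smul_eq_nsmul k (i + 1), smul_add, smul_smul, hc,
      mul_add, mul_smul_comm, mul_assoc]
    abel

end Aux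

/-- For a field `k` of prime characteristic `p` and `1 ≤ i ≤ p - 1`,
`W₁(k) = x^i·W₁(k) + y·W₁(k)`. -/
theorem weyl_eq_xi_add_y (k : Type*) [Field k] (p : ℕ) [Fact p.Prime]
    [CharP k p] (i : ℕ) (hi1 : 1 ≤ i) (hi2 : i ≤ p - 1) :
    ∀ a : Weyl k, ∃ u v : Weyl k, a = (Weyl.x k) ^ i * u + (Weyl.y k) * v := by
  have hp : 2 ≤ p := (Fact.out : p.Prime).two_le
  have hfac : (Nat.factorial i : k) ≠ 0 := by
    rw [Ne, CharP.cast_eq_zero_iff k p]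
    intro h
    have := ((Fact.out : p.Prime).dvd_factorial).1 h
    omega
  obtain ⟨v, hv⟩ := x_pow_y_pow k i
  intro a
  refine ⟨(Nat.factorial i : k)⁻¹ • Weyl.y k ^ i * a,
    ((-(Nat.factorial i : k)⁻¹) • v) * a, ?_⟩
  have h2 := congrArg (fun z : Weyl k => (Nat.factorial i : k)⁻¹ • z) hv
  simp only [smul_add, smul_smul, inv_mul_cancel₀ hfac, one_smul] at h2
  have h3 : (1 : Weyl k)
      = Weyl.x k ^ i * ((Nat.factorial i : k)⁻¹ • Weyl.y k ^ i)
        + Weyl.y k * ((-(Nat.factorial i : k)⁻¹) • v) := by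
    rw [mul_smul_comm, h2, mul_smul_comm, add_assoc, ← add_smul]
    simp
  calc a = 1 * a := (one_mul a).symm
    _ = _ := by rw [h3, add_mul, mul_assoc, mul_assoc]
end

section
/- Let k be a field of characteristic p > 0 and let S be a k-algebra containing elements x, y with [x,y] = 1 and such that x^p and y^p are central in S. Let S' be the centralizer of y in S (equivalently, the kernel of the derivation D = ad(y)). Then the multiplication map k[x] ⊗_{k[x^p]} S' → S is an isomorphism; equivalently, every element of S can be written uniquely as Σ_{i=0}^{p−1} x^i s_i with s_i ∈ S'. -/
/-!
Let `D s = s * y - y * s`. It is a derivation with `D x = 1`, and `D ^ p = 0`: `D` is the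
difference of the commuting operators of right and left multiplication by `y`, so in
characteristic `p` its `p`-th power is the commutator with the central element `y ^ p`.
On sums `∑ x ^ i sᵢ` with `D sᵢ = 0`, `D` acts as differentiation in `x`, and the
coefficients `1, …, p - 1` it produces are invertible in `k`. Hence such a sum with `p` terms
vanishes only if all `sᵢ` do (apply `D` and induct on the number of terms), and every `s` with
`D ^ n s = 0`, `n ≤ p`, is such a sum with `n` terms (integrate a decomposition of `D s`).
-/

open Finset

lemma CharP.natCast_add_one_ne_zero_of_lt {R : Type*} [AddMonoidWithOne R] {p : ℕ} [CharP R p]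
    {i : ℕ} (hi : i + 1 < p) : (i : R) + 1 ≠ 0 := by
  exact_mod_cast mt (cast_eq_zero_iff R p (i + 1)).mp (Nat.not_dvd_of_pos_of_lt i.succ_pos hi)

section Leibniz

variable {R S : Type*} [CommSemiring R] [Semiring S] [Algebra R S] {D : S →ₗ[R] S} {x : S}
  (hD : ∀ a b, D (a * b) = a * D b + D a * b) (hx : D x = 1)
include hD hx

lemma apply_pow_succ_of_leibniz (n : ℕ) : D (x ^ (n + 1)) = ((n : R) + 1) • x ^ n := by
  induction n with
  | zero => simp [hx]
  | succ n ih =>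
    rw [pow_succ, hD, ih, hx, mul_one, smul_mul_assoc, ← pow_succ]
    push_cast
    module

lemma apply_pow_succ_mul_of_leibniz (n : ℕ) {a : S} (ha : D a = 0) :
    D (x ^ (n + 1) * a) = x ^ n * (((n : R) + 1) • a) := by
  rw [hD, ha, mul_zero, zero_add, apply_pow_succ_of_leibniz hD hx, smul_mul_assoc, mul_smul_comm]

end Leibniz

section FieldOfCharP

variable {k S : Type*} [Field k] [Ring S] [Algebra k S] {D : S →ₗ[k] S} {x : S} {p : ℕ}
  [CharP k p] (hD : ∀ a b, D (a * b) = a * D b + D a * b) (hx : D x = 1)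
include hD hx

lemma eq_zero_of_sum_pow_mul_eq_zero_of_leibniz {n : ℕ} (hn : n ≤ p) {f : Fin n → S}
    (hf : ∀ i, D (f i) = 0) (hsum : ∑ i : Fin n, x ^ (i : ℕ) * f i = 0) : f = 0 := by
  induction n with
  | zero => exact Subsingleton.elim _ _
  | succ n ih =>
    rw [Fin.sum_univ_succ] at hsum
    simp only [Fin.val_zero, Fin.val_succ, pow_zero, one_mul] at hsum
    have hderiv : ∑ i : Fin n, x ^ (i : ℕ) * (((i : ℕ) : k) + 1) • f i.succ = 0 := by
      have := congrArg D hsum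
      rwa [map_add, hf, zero_add, map_sum, map_zero, sum_congr rfl fun (i : Fin n) _ =>
        apply_pow_succ_mul_of_leibniz hD hx i (hf i.succ)] at this
    have htail (i : Fin n) : f i.succ = 0 := by
      have := congrFun (ih (by omega) (fun i => by rw [map_smul, hf, smul_zero]) hderiv) i
      exact (smul_eq_zero.mp this).resolve_left
        (CharP.natCast_add_one_ne_zero_of_lt (by omega))
    have h0 : f 0 = 0 := by simpa [htail] using hsum
    funext i
    cases i using Fin.cases with
    | zero => exact h0
    | succ i => exact htail i

lemma exists_sum_pow_mul_of_pow_apply_eq_zero_of_leibniz {n : ℕ} (hn : n ≤ p) {s : S}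
    (hs : (D ^ n) s = 0) :
    ∃ f : Fin n → S, (∀ i, D (f i) = 0) ∧ s = ∑ i : Fin n, x ^ (i : ℕ) * f i := by
  induction n generalizing s with
  | zero => exact ⟨0, fun _ => map_zero D, by simpa using hs⟩
  | succ n ih =>
    obtain ⟨g, hg, hDs⟩ :=
      ih (by omega) (s := D s) (by rwa [← Module.End.mul_apply, ← pow_succ])
    set c : Fin n → S := fun i => (((i : ℕ) : k) + 1)⁻¹ • g i
    have hc (i : Fin n) : D (c i) = 0 := by simp [c, hg]
    set t := ∑ i : Fin n, x ^ ((i : ℕ) + 1) * c i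
    have hDt : D t = D s := by
      rw [map_sum, hDs]
      refine sum_congr rfl fun i _ => ?_
      rw [apply_pow_succ_mul_of_leibniz hD hx i (hc i),
        smul_inv_smul₀ (CharP.natCast_add_one_ne_zero_of_lt (by omega))]
    refine ⟨Fin.cons (s - t) c, fun i => ?_, by simp [Fin.sum_univ_succ, t]⟩
    cases i using Fin.cases with
    | zero => simp [hDt]
    | succ i => simpa using hc i

theorem existsUnique_sum_pow_mul_of_leibniz (hDp : D ^ p = 0) (s : S) :
    ∃! f : Fin p → S, (∀ i, D (f i) = 0) ∧ s = ∑ i : Fin p, x ^ (i : ℕ) * f i := by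
  obtain ⟨f, hf, hs⟩ := exists_sum_pow_mul_of_pow_apply_eq_zero_of_leibniz hD hx le_rfl
    (by simp [hDp] : (D ^ p) s = 0)
  refine ⟨f, ⟨hf, hs⟩, fun g ⟨hg, hgs⟩ => sub_eq_zero.mp ?_⟩
  refine eq_zero_of_sum_pow_mul_eq_zero_of_leibniz hD hx le_rfl (fun i => by simp [hg, hf]) ?_
  simp [mul_sub, sum_sub_distrib, ← hs, ← hgs]

end FieldOfCharP

namespace LinearMap

variable {k S : Type*} [Field k] [Ring S] [Algebra k S]

lemma mulRight_sub_mulLeft_apply_mul (y a b : S) :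
    (mulRight k y - mulLeft k y) (a * b) =
      a * (mulRight k y - mulLeft k y) b + (mulRight k y - mulLeft k y) a * b := by
  simp only [sub_apply, mulRight_apply, mulLeft_apply]
  noncomm_ring

lemma mulRight_sub_mulLeft_pow_eq_zero {p : ℕ} [Fact p.Prime] [CharP k p] {y : S}
    (hy : y ^ p ∈ Set.center S) : (mulRight k y - mulLeft k y) ^ p = 0 := by
  rcases subsingleton_or_nontrivial S with hS | hS
  · exact Subsingleton.elim _ _
  have : CharP (Module.End k S) p := charP_of_injective_algebraMap' k p
  ext s
  rw [sub_pow_char_of_commute p (commute_mulLeft_right y y).symm, pow_mulRight, pow_mulLeft]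
  simp [(Semigroup.mem_center_iff.mp hy s).symm]

end LinearMap

theorem weyl_pair_decomposition_general (k : Type*) [Field k] (p : ℕ) [Fact p.Prime]
    [CharP k p] (S : Type*) [Ring S] [Algebra k S] (x y : S)
    (hxy : x * y - y * x = 1)
    (hyp : y ^ p ∈ Set.center S) :
    ∀ s : S, ∃! f : Fin p → S,
      (∀ i, y * f i = f i * y) ∧ s = ∑ i : Fin p, x ^ (i : ℕ) * f i := by
  have hker (a : S) :
      (LinearMap.mulRight k y - LinearMap.mulLeft k y) a = 0 ↔ y * a = a * y := by
    simp only [LinearMap.sub_apply, LinearMap.mulRight_apply, LinearMap.mulLeft_apply,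
      sub_eq_zero, eq_comm]
  have hx : (LinearMap.mulRight k y - LinearMap.mulLeft k y) x = 1 := by simpa using hxy
  simpa only [hker] using existsUnique_sum_pow_mul_of_leibniz
    (LinearMap.mulRight_sub_mulLeft_apply_mul y) hx (LinearMap.mulRight_sub_mulLeft_pow_eq_zero hyp)

/-- Let `S` be an algebra over a field `k` of characteristic `p > 0` containing
`x, y` with `[x,y] = 1` and `x^p, y^p` central.  Let `S'` be the centralizer of `y`.
Then every element of `S` is uniquely of the form `Σ_{i=0}^{p-1} x^i sᵢ` with
`sᵢ ∈ S'` (equivalently, the multiplication map `k[x] ⊗_{k[x^p]} S' → S` is an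
isomorphism). -/
theorem weyl_pair_decomposition (k : Type*) [Field k] (p : ℕ) [Fact p.Prime]
    [CharP k p] (S : Type*) [Ring S] [Algebra k S] (x y : S)
    (hxy : x * y - y * x = 1)
    (hxp : x ^ p ∈ Set.center S) (hyp : y ^ p ∈ Set.center S) :
    ∀ s : S, ∃! f : Fin p → S,
      (∀ i, y * f i = f i * y) ∧ s = ∑ i : Fin p, x ^ (i : ℕ) * f i :=
  weyl_pair_decomposition_general k p S x y hxy hyp
end

section
/- Let A be a weakly central quantization over a field k of characteristic p > 2: an ℏ-torsion-free k[[ℏ]]-algebra such that for every a ∈ A there is a^{[p]} ∈ A with a^p − ℏ^{p−1} a^{[p]} ∈ Z(A). Suppose f, g ∈ A satisfy [f, g] = ℏ and f^{[p]} commutes with both f and g. Then (f + g^{p−1} f^{[p]})^p − (g^{p−1} f^{[p]})^p ∈ Z(A). -/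
/-! In characteristic `p`, left multiplication by `a + b` is the sum of the commuting operators
`D = ad a + L b` and right multiplication by `a`, hence `(a + b)^p = a^p + D^p(1)`.

Take `a = f`, `b = c := g^{p-1} f^{[p]}`. Since `p = 0`, `[f, g^{kp-m}] = -m ℏ g^{kp-m-1}`, so `D`
sends the monomial `ℏ^{m-k} (f^{[p]})^k g^{kp-m}` to the difference of two monomials of degree
`m + 1`: on coefficients, `D` acts as multiplication by `X - m`. Starting from `1`, the
coefficients of `D^m(1)` are therefore those of the falling factorial `X(X-1)⋯(X-m+1)`, which over
`𝔽_p` equals `X^p - X` for `m = p`. This gives `D^p(1) = c^p - ℏ^{p-1} f^{[p]}`, i.e.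
`(f + c)^p - c^p = f^p - ℏ^{p-1} f^{[p]}`, central by the choice of `f^{[p]}`. -/

open Polynomial LinearMap

theorem descPochhammer_zmod_self (p : ℕ) [Fact p.Prime] :
    descPochhammer (ZMod p) p = X ^ p - X := by
  have hp := (Fact.out : p.Prime).one_lt
  rw [← sub_eq_zero]
  apply eq_zero_of_natDegree_lt_card_of_eval_eq_zero' _ Finset.univ
  · intro a _
    rw [eval_sub, descPochhammer_eval_eq_prod_range, eval_sub, eval_pow, eval_X, ZMod.pow_card,
      sub_self, sub_eq_zero]
    exact Finset.prod_eq_zero (Finset.mem_range.mpr a.val_lt) (by simp)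
  · rw [Finset.card_univ, ZMod.card]
    exact IsMonicOfDegree.natDegree_sub_lt (by omega)
      ⟨descPochhammer_natDegree _ _, monic_descPochhammer _ _⟩
      ((isMonicOfDegree_X_pow _ p).sub (by rw [natDegree_X]; exact hp))

section

variable {A : Type*} [Ring A]

theorem mul_pow_sub_pow_mul {ℏ f g : A} (hfg : f * g - g * f = ℏ) (hℏg : Commute ℏ g) (n : ℕ) :
    f * g ^ n - g ^ n * f = n * ℏ * g ^ (n - 1) := by
  induction n with
  | zero => simp
  | succ n ih =>
    rcases n.eq_zero_or_pos with rfl | hn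
    · simpa using hfg
    calc f * g ^ (n + 1) - g ^ (n + 1) * f
        = (f * g ^ n - g ^ n * f) * g + g ^ n * (f * g - g * f) := by noncomm_ring
      _ = n * ℏ * (g ^ (n - 1) * g) + ℏ * g ^ n := by
        rw [ih, hfg, (hℏg.pow_right n).eq]; noncomm_ring
      _ = (n + 1 : ℕ) * ℏ * g ^ n := by
        rw [← pow_succ, Nat.sub_add_cancel hn]; push_cast; noncomm_ring

/- The exponent `k * p - m` is truncated only when `k = 0 < m`; in `pochhammerCombination` that
monomial gets coefficient `0`, the constant term of a falling factorial of positive length. -/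
def heisenbergMonomial (p : ℕ) (ℏ fp g : A) (m k : ℕ) : A :=
  ℏ ^ (m - k) * fp ^ k * g ^ (k * p - m)

variable {p : ℕ} [Fact p.Prime] [Algebra (ZMod p) A]

variable (p) in
def adAddMulLeft (a b : A) : Module.End (ZMod p) A :=
  mulLeft (ZMod p) (a + b) - mulRight (ZMod p) a

@[simp]
theorem adAddMulLeft_apply (a b x : A) : adAddMulLeft p a b x = (a + b) * x - x * a := rfl

theorem add_pow_char_eq_add_adAddMulLeft_pow_apply (a b : A) :
    (a + b) ^ p = a ^ p + (adAddMulLeft p a b ^ p) 1 := by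
  have hcomm : Commute (adAddMulLeft p a b) (mulRight (ZMod p) a) :=
    (commute_mulLeft_right _ _).sub_left (Commute.refl _)
  have hchar : (p : Module.End (ZMod p) A) = 0 := by
    ext x
    exact ZModModule.char_nsmul_eq_zero p x
  have hsum : adAddMulLeft p a b + mulRight (ZMod p) a = mulLeft (ZMod p) (a + b) :=
    sub_add_cancel _ _
  have h := hcomm.add_pow_prime_eq (Fact.out : p.Prime)
  rw [hchar, zero_mul, zero_mul, zero_mul, add_zero, hsum, pow_mulLeft, pow_mulRight] at h
  simpa [add_comm] using congr($h 1)

variable (p) in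
noncomputable def pochhammerCombination (ℏ fp g : A) (m : ℕ) : A :=
  ∑ k ∈ Finset.range (m + 1),
    (descPochhammer (ZMod p) m).coeff k • heisenbergMonomial p ℏ fp g m k

variable {ℏ f g fp : A} (hfg : f * g - g * f = ℏ) (hℏf : Commute ℏ f) (hℏg : Commute ℏ g)
  (hcf : Commute fp f) (hcg : Commute fp g)
include hfg hℏf hℏg hcf hcg

omit hℏf hℏg in
theorem commute_hbar_of_commute : Commute ℏ fp := by
  rw [← hfg]
  exact ((hcf.mul_right hcg).sub_right (hcg.mul_right hcf)).symm

omit [Algebra (ZMod p) A] hℏf in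
theorem mul_heisenbergMonomial {m k : ℕ} (hmk : m ≤ k * p) :
    g ^ (p - 1) * fp * heisenbergMonomial p ℏ fp g m k =
      heisenbergMonomial p ℏ fp g (m + 1) (k + 1) := by
  have hℏfp := commute_hbar_of_commute hfg hcf hcg
  have hexp : (k + 1) * p - (m + 1) = p - 1 + (k * p - m) := by
    have := (Fact.out : p.Prime).one_lt
    rw [add_one_mul]; omega
  have hX : Commute (g ^ (p - 1)) (ℏ ^ (m - k) * (fp * fp ^ k)) :=
    (hℏg.pow_pow _ _).symm.mul_right ((hcg.symm.pow_left _).mul_right (hcg.symm.pow_pow _ _))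
  rw [heisenbergMonomial, heisenbergMonomial, hexp, pow_add g, Nat.add_sub_add_right, pow_succ' fp]
  calc g ^ (p - 1) * fp * (ℏ ^ (m - k) * fp ^ k * g ^ (k * p - m))
      = g ^ (p - 1) * (ℏ ^ (m - k) * (fp * fp ^ k)) * g ^ (k * p - m) := by
        simp only [mul_assoc]; rw [← mul_assoc fp, ← (hℏfp.pow_left _).eq, mul_assoc]
    _ = _ := by rw [hX.eq, mul_assoc]

theorem mul_heisenbergMonomial_sub_heisenbergMonomial_mul {m k : ℕ} (hkm : k ≤ m)
    (hmk : m ≤ k * p) :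
    f * heisenbergMonomial p ℏ fp g m k - heisenbergMonomial p ℏ fp g m k * f =
      -((m : ZMod p) • heisenbergMonomial p ℏ fp g (m + 1) k) := by
  obtain ⟨z, hz⟩ : ∃ z, z = ℏ ^ (m - k) * fp ^ k := ⟨_, rfl⟩
  have hzf : Commute z f := hz ▸ (hℏf.pow_left _).mul_left (hcf.pow_left _)
  have hzℏ : z * ℏ = ℏ ^ (m + 1 - k) * fp ^ k := by
    rw [hz, mul_assoc, ((commute_hbar_of_commute hfg hcf hcg).pow_right k).eq.symm, ← mul_assoc,
      ← pow_succ, Nat.sub_add_comm hkm]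
  have hcast : ((k * p - m : ℕ) : A) = -(m : A) := by
    have hp0 : (p : A) = 0 := by simpa using ZModModule.char_nsmul_eq_zero p (1 : A)
    rw [Nat.cast_sub hmk, Nat.cast_mul, hp0, mul_zero, zero_sub]
  rw [heisenbergMonomial, ← hz]
  calc f * (z * g ^ (k * p - m)) - z * g ^ (k * p - m) * f
      = z * (f * g ^ (k * p - m) - g ^ (k * p - m) * f) := by
        rw [← mul_assoc, ← hzf.eq]; noncomm_ring
    _ = -(m * (z * ℏ * g ^ (k * p - (m + 1)))) := by
        rw [mul_pow_sub_pow_mul hfg hℏg, hcast, Nat.sub_sub, neg_mul, neg_mul, mul_neg,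
          neg_inj, ← mul_assoc, ← mul_assoc, ← Nat.cast_comm m z, mul_assoc, mul_assoc,
          mul_assoc]
    _ = _ := by
        rw [hzℏ, Nat.cast_smul_eq_nsmul, nsmul_eq_mul, heisenbergMonomial]

theorem adAddMulLeft_heisenbergMonomial {m k : ℕ} (hkm : k ≤ m) (hmk : m ≤ k * p) :
    adAddMulLeft p f (g ^ (p - 1) * fp) (heisenbergMonomial p ℏ fp g m k) =
      heisenbergMonomial p ℏ fp g (m + 1) (k + 1) -
        (m : ZMod p) • heisenbergMonomial p ℏ fp g (m + 1) k := by
  rw [adAddMulLeft_apply, add_mul, add_sub_right_comm,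
    mul_heisenbergMonomial_sub_heisenbergMonomial_mul hfg hℏf hℏg hcf hcg hkm hmk,
    mul_heisenbergMonomial hfg hℏg hcf hcg hmk]
  abel

theorem adAddMulLeft_pochhammerCombination {m : ℕ} (hm : m < p) :
    adAddMulLeft p f (g ^ (p - 1) * fp) (pochhammerCombination p ℏ fp g m) =
      pochhammerCombination p ℏ fp g (m + 1) := by
  set P := descPochhammer (ZMod p) m
  have hterm : ∀ k ∈ Finset.range (m + 1),
      P.coeff k • adAddMulLeft p f (g ^ (p - 1) * fp) (heisenbergMonomial p ℏ fp g m k) =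
        P.coeff k • (heisenbergMonomial p ℏ fp g (m + 1) (k + 1) -
          (m : ZMod p) • heisenbergMonomial p ℏ fp g (m + 1) k) := by
    intro k hk
    rcases Nat.eq_zero_or_pos k with rfl | hk0
    · rcases Nat.eq_zero_or_pos m with rfl | hm0
      · rw [adAddMulLeft_heisenbergMonomial hfg hℏf hℏg hcf hcg le_rfl (Nat.zero_le _)]
      · rw [coeff_zero_eq_eval_zero, descPochhammer_ne_zero_eval_zero _ hm0.ne', zero_smul,
          zero_smul]
    · rw [adAddMulLeft_heisenbergMonomial hfg hℏf hℏg hcf hcg (Finset.mem_range_succ_iff.mp hk)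
        (hm.le.trans (Nat.le_mul_of_pos_left p hk0))]
  have hcoeff : ∀ k, (descPochhammer (ZMod p) (m + 1)).coeff k =
      (P * X).coeff k - (m : ZMod p) * P.coeff k := by
    intro k
    rw [descPochhammer_succ_right, mul_sub, coeff_sub, ← C_eq_natCast, coeff_mul_C,
      mul_comm (P.coeff k)]
  have hdeg : P.coeff (m + 1) = 0 :=
    coeff_eq_zero_of_natDegree_lt (by rw [descPochhammer_natDegree]; omega)
  rw [pochhammerCombination, map_sum]
  simp only [map_smul]
  rw [Finset.sum_congr rfl hterm, pochhammerCombination]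
  simp only [hcoeff, sub_smul, smul_sub, Finset.sum_sub_distrib, mul_smul]
  congr 1
  · rw [Finset.sum_range_succ' _ (m + 1), mul_coeff_zero, coeff_X_zero, mul_zero, zero_smul,
      add_zero]
    simp only [coeff_mul_X]
  · rw [Finset.sum_range_succ _ (m + 1), hdeg, zero_smul, smul_zero, add_zero]
    simp only [smul_comm (m : ZMod p)]

theorem adAddMulLeft_pow_apply_one {m : ℕ} (hm : m ≤ p) :
    (adAddMulLeft p f (g ^ (p - 1) * fp) ^ m) 1 = pochhammerCombination p ℏ fp g m := by
  induction m with
  | zero => simp [pochhammerCombination, heisenbergMonomial]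
  | succ m ih =>
    rw [pow_succ', Module.End.mul_apply, ih (by omega),
      adAddMulLeft_pochhammerCombination hfg hℏf hℏg hcf hcg hm]

omit hfg hℏf hℏg hcf in
theorem pochhammerCombination_self :
    pochhammerCombination p ℏ fp g p = (g ^ (p - 1) * fp) ^ p - ℏ ^ (p - 1) * fp := by
  have hp := (Fact.out : p.Prime).one_lt
  simp only [pochhammerCombination, descPochhammer_zmod_self, coeff_sub, coeff_X_pow, coeff_X,
    sub_smul, ite_smul, one_smul, zero_smul, Finset.sum_sub_distrib, Finset.sum_ite_eq',
    Finset.sum_ite_eq, Finset.mem_range, lt_add_one, if_true, show 1 < p + 1 by omega]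
  rw [heisenbergMonomial, heisenbergMonomial, Nat.sub_self, one_mul, Nat.sub_self, pow_zero,
    pow_zero, one_mul, pow_one, mul_one, (hcg.symm.pow_left _).mul_pow, ← pow_mul,
    ← (hcg.pow_pow _ _).eq, Nat.sub_one_mul]

theorem add_pow_sub_pow_eq_pow_sub_mul :
    (f + g ^ (p - 1) * fp) ^ p - (g ^ (p - 1) * fp) ^ p = f ^ p - ℏ ^ (p - 1) * fp := by
  rw [add_pow_char_eq_add_adAddMulLeft_pow_apply,
    adAddMulLeft_pow_apply_one hfg hℏf hℏg hcf hcg le_rfl, pochhammerCombination_self hcg]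
  abel

end

theorem weakly_central_identity_general (k : Type*) [Field k] (p : ℕ) [Fact p.Prime]
    [CharP k p]
    (A : Type*) [Ring A] [Algebra (PowerSeries k) A]
    (ℏ : A) (hℏ : ℏ = algebraMap (PowerSeries k) A PowerSeries.X)
    (f g fp : A) (hfg : f * g - g * f = ℏ)
    (hfp : f ^ p - ℏ ^ (p - 1) * fp ∈ Set.center A)
    (hcf : Commute fp f) (hcg : Commute fp g) :
    (f + g ^ (p - 1) * fp) ^ p - (g ^ (p - 1) * fp) ^ p ∈ Set.center A := by
  let _ : Algebra k A := Algebra.compHom A (algebraMap k (PowerSeries k))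
  let _ : Algebra (ZMod p) A := Algebra.compHom A (ZMod.castHom (dvd_refl p) k)
  have hℏ_comm (a : A) : Commute ℏ a := hℏ ▸ Algebra.commute_algebraMap_left _ a
  rwa [add_pow_sub_pow_eq_pow_sub_mul hfg (hℏ_comm f) (hℏ_comm g) hcf hcg]

/-- Let `A` be a weakly central quantization over a field `k` of characteristic
`p > 2`: an `ℏ`-torsion-free `k[[ℏ]]`-algebra such that every `a ∈ A` admits
`a^{[p]}` with `a^p − ℏ^{p−1} a^{[p]} ∈ Z(A)`.  If `f, g ∈ A` satisfy `[f,g] = ℏ`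
and `f^{[p]}` commutes with `f` and `g`, then
`(f + g^{p−1} f^{[p]})^p − (g^{p−1} f^{[p]})^p ∈ Z(A)`. -/
theorem weakly_central_identity (k : Type*) [Field k] (p : ℕ) [Fact p.Prime]
    [CharP k p] (hp2 : 2 < p)
    (A : Type*) [Ring A] [Algebra (PowerSeries k) A]
    (ℏ : A) (hℏ : ℏ = algebraMap (PowerSeries k) A PowerSeries.X)
    (htf : ∀ a : A, ℏ * a = 0 → a = 0)
    (hwc : ∀ a : A, ∃ b : A, a ^ p - ℏ ^ (p - 1) * b ∈ Set.center A)
    (f g fp : A) (hfg : f * g - g * f = ℏ)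
    (hfp : f ^ p - ℏ ^ (p - 1) * fp ∈ Set.center A)
    (hcf : Commute fp f) (hcg : Commute fp g) :
    (f + g ^ (p - 1) * fp) ^ p - (g ^ (p - 1) * fp) ^ p ∈ Set.center A :=
  weakly_central_identity_general k p A ℏ hℏ f g fp hfg hfp hcf hcg
end

section
/- Let A be an ℏ-torsion-free k[[ℏ]]-algebra over a field k of characteristic p with A/ℏA commutative, and let B = A/ℏA be the induced Poisson algebra. If A is weakly central (for every a ∈ A there is a^{[p]} with a^p − ℏ^{p−1}a^{[p]} ∈ Z(A)), then B is a weakly restricted Poisson algebra: for every b ∈ B there exists b^{[p]} ∈ B with ad(b)^p = ad(b^{[p]}) as derivations of B. -/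
/-- Let `A` be an `ℏ`-torsion-free `k[[ℏ]]`-algebra over a field of
characteristic `p` with `A/ℏA` commutative, and let `br` be the map with
`ℏ · br a b = [a,b]` inducing the Poisson bracket on `B = A/ℏA`.  If `A` is
weakly central (every `a` admits `a^{[p]}` with `a^p − ℏ^{p−1}a^{[p]} ∈ Z(A)`),
then `B` is weakly restricted: for every `b ∈ B` there is `b^{[p]} ∈ B` with
`ad(b)^p = ad(b^{[p]})`; in terms of lifts: for every `a ∈ A` there is `a' ∈ A`
with `(br a)^{∘p} c ≡ br a' c mod ℏA` for all `c`. -/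
theorem weakly_central_implies_weakly_restricted (k : Type*) [Field k] (p : ℕ)
    [Fact p.Prime] [CharP k p]
    (A : Type*) [Ring A] [Algebra (PowerSeries k) A]
    (ℏ : A) (hℏ : ℏ = algebraMap (PowerSeries k) A PowerSeries.X)
    (htf : ∀ a : A, ℏ * a = 0 → a = 0)
    (hcomm : ∀ a b : A, ∃ c : A, a * b - b * a = ℏ * c)
    (br : A → A → A) (hbr : ∀ a b : A, ℏ * br a b = a * b - b * a)
    (hwc : ∀ a : A, ∃ b : A, a ^ p - ℏ ^ (p - 1) * b ∈ Set.center A) :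
    ∀ a : A, ∃ a' : A, ∀ c : A, ∃ d : A, (br a)^[p] c - br a' c = ℏ * d := by
  intro a
  -- trivial case
  by_cases hA : Subsingleton A
  · exact ⟨a, fun c => ⟨0, Subsingleton.elim _ _⟩⟩
  haveI : Nontrivial A := not_subsingleton_iff_nontrivial.mp hA
  haveI : CharP A p := charP_of_injective_ringHom
    (((algebraMap (PowerSeries k) A).comp (algebraMap k (PowerSeries k))).injective) p
  haveI : CharP (Module.End (PowerSeries k) A) p := by
    constructor
    intro n
    rw [← CharP.cast_eq_zero_iff A p n]
    constructor
    · intro h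
      have := congrArg (fun f : Module.End (PowerSeries k) A => f 1) h
      simpa [Module.End.natCast_apply, nsmul_eq_mul] using this
    · intro h
      ext x
      simp [Module.End.natCast_apply, nsmul_eq_mul, h]
  -- ℏ is central
  have hcen : ∀ y : A, ℏ * y = y * ℏ := by
    intro y; rw [hℏ]; exact (Algebra.commutes _ _)
  -- cancellation of powers of ℏ
  have hcancel : ∀ n : ℕ, ∀ x : A, ℏ ^ n * x = 0 → x = 0 := by
    intro n
    induction n with
    | zero => intro x hx; simpa using hx
    | succ n ih =>
      intro x hx
      rw [pow_succ, mul_assoc] at hx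
      exact htf x (ih _ hx)
  obtain ⟨b, hb⟩ := hwc a
  refine ⟨b, fun c => ⟨0, ?_⟩⟩
  rw [mul_zero, sub_eq_zero]
  -- key: ℏ^p * (br a)^[p] c = ℏ^p * br b c, then cancel
  have key : ℏ ^ p * (br a)^[p] c = ℏ ^ p * br b c := by
    set R := PowerSeries k
    set L := LinearMap.mulLeft R a with hL
    set Rm := LinearMap.mulRight R a with hRm
    -- step 1: ℏ^n * (br a)^[n] c = ((L - Rm)^n) c
    have step1 : ∀ n : ℕ, ℏ ^ n * (br a)^[n] c = ((L - Rm) ^ n) c := by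
      intro n
      induction n with
      | zero => simp
      | succ n ih =>
        rw [Function.iterate_succ_apply']
        conv_rhs => rw [pow_succ', Module.End.mul_apply]
        rw [← ih]
        have : (L - Rm) (ℏ ^ n * (br a)^[n] c)
            = a * (ℏ ^ n * (br a)^[n] c) - (ℏ ^ n * (br a)^[n] c) * a := by
          simp [hL, hRm, LinearMap.sub_apply]
        rw [this]
        have hcenpow : ∀ m : ℕ, ∀ y : A, ℏ ^ m * y = y * ℏ ^ m := by
          intro m
          induction m with
          | zero => simp
          | succ m ihm =>
            intro y
            rw [pow_succ, mul_assoc, hcen, ← mul_assoc, ihm, mul_assoc]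
        calc ℏ ^ (n + 1) * br a ((br a)^[n] c)
            = ℏ ^ n * (ℏ * br a ((br a)^[n] c)) := by rw [pow_succ, mul_assoc]
          _ = ℏ ^ n * (a * (br a)^[n] c - (br a)^[n] c * a) := by rw [hbr]
          _ = a * (ℏ ^ n * (br a)^[n] c) - (ℏ ^ n * (br a)^[n] c) * a := by
              simp only [mul_sub, ← mul_assoc, ← hcenpow n a]
    -- step 2: Frobenius for inner derivation
    have step2 : ((L - Rm) ^ p) c = a ^ p * c - c * a ^ p := by
      rw [sub_pow_char_of_commute p (LinearMap.commute_mulLeft_right a a),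
        LinearMap.pow_mulLeft, LinearMap.pow_mulRight]
      simp [LinearMap.sub_apply]
    -- step 3: use weak centrality
    have step3 : a ^ p * c - c * a ^ p = ℏ ^ p * br b c := by
      set z := a ^ p - ℏ ^ (p - 1) * b with hz
      have hzc : z * c = c * z := ((Set.mem_center_iff.mp hb).comm c)
      have hap : a ^ p = ℏ ^ (p - 1) * b + z := by rw [hz]; abel
      have hcenpow : ∀ m : ℕ, ∀ y : A, ℏ ^ m * y = y * ℏ ^ m := by
        intro m
        induction m with
        | zero => simp
        | succ m ihm =>
          intro y
          rw [pow_succ, mul_assoc, hcen, ← mul_assoc, ihm, mul_assoc]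
      have hp1 : p - 1 + 1 = p := Nat.succ_pred_eq_of_pos (Fact.out : p.Prime).pos
      calc a ^ p * c - c * a ^ p
          = ℏ ^ (p - 1) * (b * c - c * b) := by
            rw [hap]
            rw [add_mul, mul_add, mul_assoc]
            have : c * (ℏ ^ (p - 1) * b) = ℏ ^ (p - 1) * (c * b) := by
              rw [← mul_assoc, ← hcenpow (p - 1) c, mul_assoc]
            rw [this, hzc]
            conv_rhs => rw [mul_sub]
            abel
        _ = ℏ ^ (p - 1) * (ℏ * br b c) := by rw [hbr]
        _ = ℏ ^ p * br b c := by rw [← mul_assoc, ← pow_succ, hp1]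
    rw [step1 p, step2, step3]
  have := hcancel p ((br a)^[p] c - br b c) (by rw [mul_sub, key, sub_self])
  exact sub_eq_zero.mp this
end
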